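/- arXiv:2209.04261 — 3 statements merged into one kernel-verified Lean document; each statement's English description precedes it below -/
import Mathlib

section
/- Let N ≥ 3 be a natural number, set m := ⌊N/ln N⌋, let p⁺, p⁻ be reals, and define P(α) := α·p⁺ + (1−α)·p⁻ and f(α) := ∑_{k=0}^{m} C(N,k)·P(α)^{k}·(1−P(α))^{N−k}. Then for all real α, f'(α) = (p⁻ − p⁺)·N·C(N−1, m)·P(α)^{m}·(1−P(α))^{N−m−1}. -/
/-- The Tolerance Principle threshold: `⌊N / ln N⌋`. -/
noncomputable def tpThreshold (N : ℕ) : ℕ := ⌊(N : ℝ) / Real.log N⌋₊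

private lemma term_deriv (N k : ℕ) (x : ℝ) :
    HasDerivAt (fun x : ℝ => (N.choose k : ℝ) * x ^ k * (1 - x) ^ (N - k))
      ((N.choose k : ℝ) * ((k : ℝ) * x ^ (k - 1) * (1 - x) ^ (N - k)
        - x ^ k * (((N - k : ℕ) : ℝ) * (1 - x) ^ (N - k - 1)))) x := by
  have h1 : HasDerivAt (fun x : ℝ => (N.choose k : ℝ) * x ^ k)
      ((N.choose k : ℝ) * ((k : ℝ) * x ^ (k - 1))) x := (hasDerivAt_pow k x).const_mul _
  have hsub : HasDerivAt (fun x : ℝ => 1 - x) (-1) x := by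
    exact (hasDerivAt_id' x).const_sub 1
  have h2 : HasDerivAt (fun x : ℝ => (1 - x) ^ (N - k))
      ((((N - k : ℕ) : ℝ) * (1 - x) ^ (N - k - 1)) * (-1)) x :=
    (hasDerivAt_pow (N - k) (1 - x)).comp x hsub
  have := h1.mul h2
  exact this.congr_deriv (by ring)

private lemma sum_deriv (N m : ℕ) (hm : m < N) (x : ℝ) :
    HasDerivAt (fun x : ℝ => ∑ k ∈ Finset.range (m + 1),
        (N.choose k : ℝ) * x ^ k * (1 - x) ^ (N - k))
      (-((N : ℝ) * ((N - 1).choose m : ℝ) * x ^ m * (1 - x) ^ (N - m - 1))) x := by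
  induction m with
  | zero =>
      convert term_deriv N 0 x using 1
      · funext y
        simp
      · simp
  | succ m ih =>
      have hmN : m < N := Nat.lt_of_succ_lt hm
      have hsum := (ih hmN).add (term_deriv N (m + 1) x)
      have hN1 : N - 1 + 1 = N := by omega
      have id1 : (N : ℝ) * ((N - 1).choose m : ℝ) = (N.choose (m + 1) : ℝ) * ((m : ℝ) + 1) := by
        have h := Nat.add_one_mul_choose_eq (N - 1) m
        simp only [Nat.succ_eq_add_one, hN1] at h
        exact_mod_cast h
      have id2 : (N.choose (m + 1) : ℝ) * (((N - m - 1 : ℕ)) : ℝ)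
          = (N : ℝ) * ((N - 1).choose (m + 1) : ℝ) := by
        have ha := Nat.add_one_mul_choose_eq (N - 1) (m + 1)
        simp only [Nat.succ_eq_add_one, hN1] at ha
        have hb := Nat.choose_succ_right_eq N (m + 1)
        have h := ha.trans hb
        rw [show N - (m + 1) = N - m - 1 from by omega] at h
        exact_mod_cast h.symm
      refine (hsum.congr_deriv (Eq.symm ?_)).congr_of_eventuallyEq
        (Filter.Eventually.of_forall fun y => Finset.sum_range_succ _ _)
      rw [show N - (m + 1) - 1 = N - m - 2 from by omega,
        show N - (m + 1) = N - m - 1 from by omega, show m + 1 - 1 = m from by omega]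
      push_cast at id1 ⊢
      linear_combination x ^ m * (1 - x) ^ (N - m - 1) * id1
        + x ^ (m + 1) * (1 - x) ^ (N - m - 2) * id2

private lemma tp_lt (N : ℕ) (hN : 3 ≤ N) : tpThreshold N < N := by
  have hN0 : (0 : ℝ) < N := by positivity
  have hlog : 1 < Real.log N := by
    rw [show (1 : ℝ) = Real.log (Real.exp 1) by simp]
    apply Real.log_lt_log (Real.exp_pos 1)
    calc Real.exp 1 < 2.7182818286 := Real.exp_one_lt_d9
      _ < 3 := by norm_num
      _ ≤ N := by exact_mod_cast hN
  have hx : (N : ℝ) / Real.log N < N := div_lt_self hN0 hlog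
  have hnn : (0 : ℝ) ≤ (N : ℝ) / Real.log N :=
    div_nonneg (le_of_lt hN0) (by linarith)
  rw [tpThreshold, Nat.floor_lt hnn]
  exact_mod_cast hx

/-- Derivative of the base TP dynamics map.  With `m = ⌊N/ln N⌋`,
`P(α) = α p⁺ + (1−α) p⁻` and `f(α) = ∑_{k=0}^{m} C(N,k) P(α)^k (1−P(α))^{N−k}`, one has
`f'(α) = (p⁻ − p⁺)·N·C(N−1,m)·P(α)^m·(1−P(α))^{N−m−1}` for all real `α`. -/
theorem stmt_6 (N : ℕ) (hN : 3 ≤ N) (pPlus pMinus : ℝ) (α : ℝ) :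
    HasDerivAt (fun a : ℝ => ∑ k ∈ Finset.range (tpThreshold N + 1),
        (N.choose k : ℝ) * (a * pPlus + (1 - a) * pMinus) ^ k
          * (1 - (a * pPlus + (1 - a) * pMinus)) ^ (N - k))
      ((pMinus - pPlus) * (N : ℝ) * ((N - 1).choose (tpThreshold N) : ℝ)
        * (α * pPlus + (1 - α) * pMinus) ^ (tpThreshold N)
        * (1 - (α * pPlus + (1 - α) * pMinus)) ^ (N - tpThreshold N - 1)) α := by
  set m := tpThreshold N with hm
  have hP : HasDerivAt (fun a : ℝ => a * pPlus + (1 - a) * pMinus) (pPlus - pMinus) α := by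
    have := ((hasDerivAt_id α).mul_const pPlus).add
      (((hasDerivAt_const α (1:ℝ)).sub (hasDerivAt_id α)).mul_const pMinus)
    exact this.congr_deriv (by ring)
  have hmain := (sum_deriv N m (tp_lt N hN) (α * pPlus + (1 - α) * pMinus)).comp α hP
  exact hmain.congr_deriv (by ring)
end

section
/- Let N ≥ 3 be a natural number, set m := ⌊N/ln N⌋, and let p⁺, p⁻ ∈ [0,1] with p⁺ < p⁻. Define P(α) := α·p⁺ + (1−α)·p⁻ and f(α) := ∑_{k=0}^{m} C(N,k)·P(α)^{k}·(1−P(α))^{N−k}. Then f is strictly increasing on the interval [0,1]. -/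
open Finset

lemma nat_idA (N j : ℕ) (hN : 1 ≤ N) :
    N * (N-1).choose j = N.choose (j+1) * (j+1) := by
  rcases N with _ | n
  · omega
  · simpa using Nat.add_one_mul_choose_eq n j

lemma nat_idB (N k : ℕ) (hk : k < N) :
    N.choose k * (N - k) = N * (N-1).choose k := by
  rw [← Nat.choose_succ_right_eq, nat_idA N k (by omega)]

lemma cdf_deriv (N m : ℕ) (hm : m < N) (p : ℝ) :
    HasDerivAt (fun p : ℝ => ∑ k ∈ Finset.range (m+1),
        (N.choose k : ℝ) * p ^ k * (1 - p) ^ (N - k))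
      (-((N:ℝ) * ((N-1).choose m) * p ^ m * (1-p) ^ (N-1-m))) p := by
  set u : ℕ → ℝ := fun k => (N:ℝ) * ((N-1).choose k) * p ^ k * (1-p) ^ (N-1-k) with hu
  have key : ∀ k ∈ Finset.range (m+1),
      HasDerivAt (fun p : ℝ => (N.choose k : ℝ) * p ^ k * (1 - p) ^ (N - k))
        ((if k = 0 then 0 else u (k-1)) - u k) p := by
    intro k hk
    have hkN : k < N := lt_of_le_of_lt (Nat.lt_succ_iff.mp (Finset.mem_range.mp hk)) hm
    have h2 : HasDerivAt (fun p : ℝ => (1-p) ^ (N-k))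
        (((N-k:ℕ):ℝ) * (1-p) ^ (N-k-1) * (-1)) p :=
      (hasDerivAt_pow (N-k) (1-p)).comp p ((hasDerivAt_id p).const_sub 1)
    have h1 : HasDerivAt (fun p : ℝ => (N.choose k : ℝ) * p ^ k)
        ((N.choose k : ℝ) * (k * p ^ (k-1))) p := (hasDerivAt_pow k p).const_mul _
    have h3 := h1.mul h2
    refine h3.congr_deriv (Eq.symm ?_)
    rcases Nat.eq_zero_or_pos k with rfl | hk0
    · rw [if_pos rfl, hu]
      simp only [Nat.choose_zero_right, Nat.cast_one, pow_zero, Nat.sub_zero, Nat.cast_zero,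
        Nat.zero_sub]
      ring
    · obtain ⟨j, rfl⟩ : ∃ j, k = j + 1 := ⟨k - 1, by omega⟩
      rw [if_neg (by omega)]
      simp only [Nat.add_sub_cancel, hu]
      rw [show N - (j+1) = N - 1 - j from by omega,
          show N - 1 - j - 1 = N - 1 - (j+1) from by omega]
      have eA : (N:ℝ) * ((N-1).choose j : ℝ) = ((j+1:ℕ):ℝ) * (N.choose (j+1) : ℝ) := by
        exact_mod_cast (nat_idA N j (by omega)).trans (Nat.mul_comm _ _)
      have eB : (N:ℝ) * ((N-1).choose (j+1) : ℝ) = ((N-1-j:ℕ):ℝ) * (N.choose (j+1) : ℝ) := by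
        have h := nat_idB N (j+1) hkN
        rw [show N - (j+1) = N - 1 - j from by omega] at h
        exact_mod_cast h.symm.trans (Nat.mul_comm _ _)
      rw [eA, eB]
      push_cast
      ring
  have hsum := HasDerivAt.fun_sum key
  refine hsum.congr_deriv (Eq.symm ?_)
  rw [Finset.sum_sub_distrib,
    Finset.sum_range_succ' (fun k => if k = 0 then 0 else u (k-1)) m]
  simp only [Nat.add_sub_cancel, if_neg (Nat.succ_ne_zero _), if_pos rfl]
  rw [Finset.sum_range_succ u m]
  simp [hu]

lemma cdf_strictAntiOn (N m : ℕ) (hm : m < N) :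
    StrictAntiOn (fun p : ℝ => ∑ k ∈ Finset.range (m+1),
        (N.choose k : ℝ) * p ^ k * (1 - p) ^ (N - k)) (Set.Icc (0:ℝ) 1) := by
  apply strictAntiOn_of_deriv_neg (convex_Icc 0 1)
  · exact Continuous.continuousOn (by continuity)
  · intro p hp
    rw [interior_Icc] at hp
    rw [(cdf_deriv N m hm p).deriv]
    have hc : 0 < ((N-1).choose m : ℝ) := by
      exact_mod_cast Nat.choose_pos (by omega : m ≤ N - 1)
    have hN0 : (0:ℝ) < N := by
      have : 0 < N := by omega
      exact_mod_cast this
    have hp0 : 0 < p := hp.1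
    have hp1 : 0 < 1 - p := by linarith [hp.2]
    have : 0 < (N:ℝ) * ((N-1).choose m) * p ^ m * (1-p) ^ (N-1-m) := by positivity
    linarith

/-- For `N ≥ 3`, `p⁺, p⁻ ∈ [0,1]` with `p⁺ < p⁻`, the base TP dynamics map
`f(α) = ∑_{k=0}^{⌊N/ln N⌋} C(N,k) P(α)^k (1−P(α))^{N−k}`, with
`P(α) = α p⁺ + (1−α) p⁻`, is strictly increasing on `[0,1]`. -/
theorem stmt_7 (N : ℕ) (hN : 3 ≤ N) (pPlus pMinus : ℝ)
    (hPlus : pPlus ∈ Set.Icc (0 : ℝ) 1) (hMinus : pMinus ∈ Set.Icc (0 : ℝ) 1)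
    (hlt : pPlus < pMinus) :
    StrictMonoOn (fun a : ℝ => ∑ k ∈ Finset.range (tpThreshold N + 1),
        (N.choose k : ℝ) * (a * pPlus + (1 - a) * pMinus) ^ k
          * (1 - (a * pPlus + (1 - a) * pMinus)) ^ (N - k))
      (Set.Icc (0 : ℝ) 1) := by
  have hlog : 1 < Real.log N := by
    rw [Real.lt_log_iff_exp_lt (by positivity)]
    calc Real.exp 1 < 2.7182818286 := Real.exp_one_lt_d9
    _ < 3 := by norm_num
    _ ≤ N := by exact_mod_cast hN
  have hmN : tpThreshold N < N := by
    rw [tpThreshold, Nat.floor_lt (by positivity)]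
    calc (N:ℝ) / Real.log N < (N:ℝ) / 1 := by
          apply div_lt_div_of_pos_left (by positivity) one_pos hlog
    _ = N := by ring
  have hg := cdf_strictAntiOn N (tpThreshold N) hmN
  have hP : StrictAntiOn (fun a : ℝ => a * pPlus + (1 - a) * pMinus) (Set.Icc (0:ℝ) 1) := by
    intro a _ b _ hab
    have : (b - a) * (pMinus - pPlus) > 0 := by
      apply mul_pos (by linarith) (by linarith)
    dsimp only
    nlinarith
  have hmap : Set.MapsTo (fun a : ℝ => a * pPlus + (1 - a) * pMinus)
      (Set.Icc (0:ℝ) 1) (Set.Icc (0:ℝ) 1) := by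
    intro a ha
    obtain ⟨ha0, ha1⟩ := ha
    obtain ⟨hp0, hp1⟩ := hPlus
    obtain ⟨hm0, hm1⟩ := hMinus
    constructor
    · dsimp only; nlinarith
    · dsimp only; nlinarith
  exact hg.comp hP hmap
end

section
/- Define, for real N > e and e(N) := N/ln N, the quantity T(N, e(N)) := (e(N)/N)·(e(N)/ln(e(N))) + (1 − e(N)/N)·e(N), and T(N,N) := N/ln N. Then lim_{N→∞} T(N, e(N)) / T(N, N) = 1. (That is, the Tolerance Principle threshold e = N/ln N asymptotically equates the expected search times of the Elsewhere Condition Model and the Ranked Listing Model, after replacing harmonic numbers by natural logarithms.) -/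
open Filter Real

private lemma aux_div_log_atTop : Tendsto (fun N : ℝ => N / Real.log N) atTop atTop := by
  have h0 : Tendsto (fun N : ℝ => Real.log N / N) atTop (nhds 0) :=
    Real.isLittleO_log_id_atTop.tendsto_div_nhds_zero
  have hpos : ∀ᶠ N : ℝ in atTop, 0 < Real.log N / N := by
    filter_upwards [eventually_gt_atTop (2 : ℝ)] with N hN
    exact div_pos (Real.log_pos (by linarith)) (by linarith)
  have h1 : Tendsto (fun N : ℝ => Real.log N / N) atTop (nhdsWithin 0 (Set.Ioi 0)) :=
    tendsto_nhdsWithin_of_tendsto_nhds_of_eventually_within _ h0 hpos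
  have h2 : Tendsto (fun N : ℝ => (Real.log N / N)⁻¹) atTop atTop :=
    tendsto_inv_nhdsGT_zero.comp h1
  refine h2.congr' ?_
  filter_upwards [eventually_gt_atTop (2 : ℝ)] with N hN
  rw [inv_div]

private lemma aux_loglog_atTop : Tendsto (fun N : ℝ => Real.log (N / Real.log N)) atTop atTop :=
  Real.tendsto_log_atTop.comp aux_div_log_atTop

/-- With `e(N) = N/ln N`, `T(N,e(N)) = (e(N)/N)·(e(N)/ln(e(N))) + (1 − e(N)/N)·e(N)` and
`T(N,N) = N/ln N`, the ratio `T(N,e(N))/T(N,N)` tends to `1` as `N → ∞`: the Tolerance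
Principle threshold asymptotically equates the expected search times of the Elsewhere
Condition Model and the Ranked Listing Model. -/
theorem stmt_13 :
    Filter.Tendsto
      (fun N : ℝ =>
        (((N / Real.log N) / N) * ((N / Real.log N) / Real.log (N / Real.log N))
            + (1 - (N / Real.log N) / N) * (N / Real.log N))
          / (N / Real.log N))
      Filter.atTop (nhds 1) := by
  have hg : Tendsto
      (fun N : ℝ => (Real.log N * Real.log (N / Real.log N))⁻¹ + (1 - (Real.log N)⁻¹))
      atTop (nhds 1) := by
    have h1 : Tendsto (fun N : ℝ => (Real.log N * Real.log (N / Real.log N))⁻¹)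
        atTop (nhds 0) :=
      (Real.tendsto_log_atTop.atTop_mul_atTop₀ aux_loglog_atTop).inv_tendsto_atTop
    have h2 : Tendsto (fun N : ℝ => 1 - (Real.log N)⁻¹) atTop (nhds 1) := by
      have := Real.tendsto_log_atTop.inv_tendsto_atTop
      simpa using tendsto_const_nhds.sub this
    simpa using h1.add h2
  refine hg.congr' ?_
  have hlog : ∀ᶠ N : ℝ in atTop, 1 < Real.log (N / Real.log N) := aux_loglog_atTop.eventually_gt_atTop 1
  filter_upwards [eventually_gt_atTop (3 : ℝ), hlog] with N hN hM
  have hNpos : (0 : ℝ) < N := by linarith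
  have hL : 1 < Real.log N := by
    rw [show (1:ℝ) = Real.log (Real.exp 1) from (Real.log_exp 1).symm]
    exact Real.log_lt_log (Real.exp_pos 1) (by nlinarith [Real.exp_one_lt_d9])
  have hLne : Real.log N ≠ 0 := by linarith
  have hMne : Real.log (N / Real.log N) ≠ 0 := by linarith
  have hNne : N ≠ 0 := ne_of_gt hNpos
  field_simp
end
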